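/- Let $Y$ be a proper closed subset of a complete variety $X$ over a number field $k$, let $\phi\colon X' \to X$ be a proper birational morphism, and let $Y' = \phi^{-1}(Y)$. If $g$ and $g'$ are logarithmic distance functions for $Y$ and $Y'$ respectively, then there are positive constants $c_1, c_2$ and bounded functions such that $c_1 g + O(1) \le g' \le c_2 g + O(1)$. -/
import Mathlib


/-!
STATEMENT 1: Let `Y` be a proper closed subset of a complete variety `X` over a number
field `k`, let `φ : X' → X` be a proper birational morphism and `Y' = φ⁻¹(Y)`.  If `g` and
`g'` are logarithmic distance functions for `Y` and `Y'` respectively, then there are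
positive constants `c₁, c₂` and bounded (`O(1)`) functions such that
`c₁ g + O(1) ≤ g' ≤ c₂ g + O(1)`.

Model.  Pulling everything back to a common model `X*` dominating both `X` and `X'`, a
logarithmic distance function for `Y` (resp. `Y'`) is, up to a bounded function, a Weil
function `λ_D` (resp. `λ_{D'}`) of an effective divisor `D` (resp. `D'`) on `X*` whose
support is `Φ⁻¹(Y)`; since `Y' = φ⁻¹(Y)`, the two divisors have the *same* support.
We model:
* `P` : the set of test points `∐_v X(k̄_v)`;
* divisors on `X*` as finitely supported `ι →₀ ℤ` over the set `ι` of prime divisors;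
* a Weil-function machine `lam` assigning to each divisor a function `P → ℝ`, additive in
  the divisor, and bounded below for effective divisors;
* `g`, `g'` agree with the Weil functions of their divisors up to `O(1)`.
-/

/-- Auxiliary: if two effective divisors have the same support, a large multiple of the
first dominates the second. -/
lemma exists_nsmul_sub_nonneg {ι : Type*} (A B : ι →₀ ℤ) (hA : 0 ≤ A) (hB : 0 ≤ B)
    (hs : A.support = B.support) : ∃ n : ℕ, 1 ≤ n ∧ 0 ≤ (n • A - B) := by
  refine ⟨(B.support.sup fun i => (B i).toNat) + 1, le_add_self, ?_⟩
  rw [Finsupp.le_def]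
  intro i
  simp only [Finsupp.coe_zero, Pi.zero_apply, Finsupp.sub_apply, Finsupp.smul_apply,
    nsmul_eq_mul]
  by_cases hi : i ∈ B.support
  · have h1 : 1 ≤ A i := by
      have hAi : 0 ≤ A i := by simpa using Finsupp.le_def.mp hA i
      have : A i ≠ 0 := Finsupp.mem_support_iff.mp (hs ▸ hi)
      omega
    have hBi : 0 ≤ B i := by simpa using Finsupp.le_def.mp hB i
    have htn : ((B i).toNat : ℤ) = B i := Int.toNat_of_nonneg hBi
    have h2 : B i ≤ ((B.support.sup fun i => (B i).toNat : ℕ) : ℤ) := by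
      have h : (B i).toNat ≤ B.support.sup fun i => (B i).toNat :=
        Finset.le_sup (f := fun i => (B i).toNat) hi
      omega
    have h3 : (0:ℤ) ≤ ((B.support.sup fun i => (B i).toNat : ℕ) : ℤ) + 1 := by positivity
    push_cast
    nlinarith
  · have hB0 : B i = 0 := Finsupp.notMem_support_iff.mp hi
    have hA0 : A i = 0 := Finsupp.notMem_support_iff.mp (hs ▸ hi)
    simp [hA0, hB0]

theorem logDistance_comparison {P ι : Type*}
    (lam : (ι →₀ ℤ) → P → ℝ)
    (h_add : ∀ D D' : ι →₀ ℤ, lam (D + D') = lam D + lam D')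
    (h_eff_bddBelow : ∀ D : ι →₀ ℤ, 0 ≤ D → ∃ C : ℝ, ∀ p, -C ≤ lam D p)
    (D D' : ι →₀ ℤ) (hD : 0 ≤ D) (hD' : 0 ≤ D')
    (hsupp : D.support = D'.support)
    (g g' : P → ℝ)
    (hg : ∃ C : ℝ, ∀ p, |g p - lam D p| ≤ C)
    (hg' : ∃ C : ℝ, ∀ p, |g' p - lam D' p| ≤ C) :
    ∃ c₁ c₂ C₁ C₂ : ℝ, 0 < c₁ ∧ 0 < c₂ ∧
      ∀ p, c₁ * g p - C₁ ≤ g' p ∧ g' p ≤ c₂ * g p + C₂ := by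
  obtain ⟨Cg, hCg⟩ := hg
  obtain ⟨Cg', hCg'⟩ := hg'
  have lam_zero : lam 0 = 0 := by
    have h := h_add 0 0
    rw [add_zero] at h
    funext p
    have := congrFun h p
    simp only [Pi.add_apply] at this
    simpa using this.symm
  have lam_nsmul : ∀ (n : ℕ) (A : ι →₀ ℤ) (p : P), lam (n • A) p = n * lam A p := by
    intro n
    induction n with
    | zero => intro A p; simp [lam_zero]
    | succ n ih =>
      intro A p
      rw [succ_nsmul]
      have h := congrFun (h_add (n • A) A) p
      simp only [Pi.add_apply] at h
      rw [h, ih]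
      push_cast
      ring
  -- key estimate: for n with 0 ≤ n•A - B, lam B ≤ n * lam A + const
  have key : ∀ (A B : ι →₀ ℤ) (n : ℕ), 0 ≤ (n • A - B) →
      ∃ C : ℝ, ∀ p, lam B p ≤ n * lam A p + C := by
    intro A B n hE
    obtain ⟨C, hC⟩ := h_eff_bddBelow _ hE
    refine ⟨C, fun p => ?_⟩
    have h := congrFun (h_add (n • A - B) B) p
    rw [sub_add_cancel] at h
    simp only [Pi.add_apply] at h
    have h2 := hC p
    rw [lam_nsmul] at h
    linarith
  obtain ⟨n, hn1, hn⟩ := exists_nsmul_sub_nonneg D D' hD hD' hsupp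
  obtain ⟨m, hm1, hm⟩ := exists_nsmul_sub_nonneg D' D hD' hD hsupp.symm
  obtain ⟨CE, hCE⟩ := key D D' n hn
  obtain ⟨CF, hCF⟩ := key D' D m hm
  have hmR : (1:ℝ) ≤ (m:ℝ) := by exact_mod_cast hm1
  have hnR : (1:ℝ) ≤ (n:ℝ) := by exact_mod_cast hn1
  have hm0 : (0:ℝ) < (m:ℝ) := by linarith
  refine ⟨1 / m, n, (Cg + CF) / m + Cg', n * Cg + CE + Cg', by positivity, by linarith,
    fun p => ?_⟩
  have h1 := hCg p
  have h2 := hCg' p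
  have h3 := hCE p
  have h4 := hCF p
  rw [abs_le] at h1 h2
  constructor
  · have hmain : (g p - (Cg + CF) - m * Cg') / m ≤ g' p := by
      rw [div_le_iff₀ hm0]
      nlinarith [mul_le_mul_of_nonneg_left h2.1 (le_of_lt hm0)]
    have heq : 1 / m * g p - ((Cg + CF) / m + Cg') = (g p - (Cg + CF) - m * Cg') / m := by
      field_simp
      ring
    rw [heq]
    exact hmain
  · nlinarith [mul_le_mul_of_nonneg_left h1.2 (by linarith : (0:ℝ) ≤ (n:ℝ))]
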